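/- Let F be a family of functions X → ℝ and φ : ℝ → ℝ an L-Lipschitz function. Then for every sample S, R̂_S(φ ∘ F) ≤ L·R̂_S(F), where φ ∘ F = { φ ∘ f : f ∈ F } (Talagrand's contraction lemma). -/

import Mathlib

open Finset

/-- Empirical Rademacher complexity of a family `F` of real-valued functions on the
sample `S = (x_1, …, x_m)`: the expectation over i.i.d. Rademacher signs
`σ : Fin m → Bool` (Bool encoding ±1) of `sup_{f ∈ F} (1/m) ∑ i σ i * f (S i)`. -/
noncomputable def radComp {X : Type*} (m : ℕ) (S : Fin m → X) (F : Set (X → ℝ)) : ℝ :=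
  (∑ σ : Fin m → Bool,
    sSup ((fun f => (1 / (m : ℝ)) * ∑ i, (if σ i then (1 : ℝ) else -1) * f (S i)) '' F)) / 2 ^ m

/-!
Write the Rademacher sums coordinatewise: for per-coordinate maps `φ i`, `ψ i` with
`|φ i s - φ i t| ≤ |ψ i s - ψ i t|`, the sum over all sign vectors of
`sup_{t ∈ T} ∑ i, σ i * φ i (t i)` is at most the same sum for `ψ`. Replace `φ` by `ψ` one
coordinate `j` at a time. Pairing each `σ` with the sign vector flipped at `j` turns the step
into `sup (a + g) + sup (-a + g) ≤ sup (b + g) + sup (-b + g)`, which holds because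
`a s - a t ≤ |b s - b t|` is one of `±(b s - b t)`, and each choice splits into a term of
`sup (b + g)` plus one of `sup (-b + g)`. Talagrand's lemma is the case `φ i = φ`,
`ψ i = L • id`.
-/

open Function

def boolSign (b : Bool) : ℝ := if b then 1 else -1

@[simp]
lemma boolSign_not (b : Bool) : boolSign (!b) = -boolSign b := by
  cases b <;> simp [boolSign]

@[simp]
lemma abs_boolSign_mul (b : Bool) (x : ℝ) : |boolSign b * x| = |x| := by
  cases b <;> simp [boolSign]

lemma Real.sSup_image_const_mul {Y : Type*} {c : ℝ} (hc : 0 ≤ c) (F : Set Y) (v : Y → ℝ) :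
    sSup ((fun y => c * v y) '' F) = c * sSup (v '' F) := by
  rw [← smul_eq_mul, ← Real.sSup_smul_of_nonneg hc, ← Set.image_smul, Set.image_image]
  rfl

lemma sSup_add_sSup_neg_le_of_dominated {Y : Type*} {T : Set Y} {a b g : Y → ℝ}
    (hdom : ∀ s ∈ T, ∀ t ∈ T, a s - a t ≤ |b s - b t|)
    (hb : BddAbove ((fun t => b t + g t) '' T)) (hb' : BddAbove ((fun t => -b t + g t) '' T)) :
    sSup ((fun t => a t + g t) '' T) + sSup ((fun t => -a t + g t) '' T) ≤
      sSup ((fun t => b t + g t) '' T) + sSup ((fun t => -b t + g t) '' T) := by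
  rcases T.eq_empty_or_nonempty with rfl | hT
  · simp
  set R := sSup ((fun t => b t + g t) '' T) + sSup ((fun t => -b t + g t) '' T)
  have hpair : ∀ s ∈ T, ∀ t ∈ T, (a s + g s) + (-a t + g t) ≤ R := by
    intro s hs t ht
    have := hdom s hs t ht
    have := le_csSup hb ⟨s, hs, rfl⟩
    have := le_csSup hb ⟨t, ht, rfl⟩
    have := le_csSup hb' ⟨s, hs, rfl⟩
    have := le_csSup hb' ⟨t, ht, rfl⟩
    cases abs_cases (b s - b t) <;> simp only at * <;> linarith
  rw [← le_sub_iff_add_le]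
  refine csSup_le (hT.image _) ?_
  rintro _ ⟨s, hs, rfl⟩
  rw [le_sub_comm]
  refine csSup_le (hT.image _) ?_
  rintro _ ⟨t, ht, rfl⟩
  linarith [hpair s hs t ht]

section SignedSums

variable {m : ℕ}

noncomputable def supSignedSum (T : Set (Fin m → ℝ)) (χ : Fin m → ℝ → ℝ) (σ : Fin m → Bool) :
    ℝ :=
  sSup ((fun t => ∑ i, boolSign (σ i) * χ i (t i)) '' T)

lemma signedSum_update (χ : Fin m → ℝ → ℝ) (σ : Fin m → Bool) (j : Fin m) (b : Bool) :
    (fun t : Fin m → ℝ => ∑ i, boolSign (update σ j b i) * χ i (t i)) =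
      fun t => boolSign b * χ j (t j) + ∑ i ∈ univ.erase j, boolSign (σ i) * χ i (t i) := by
  funext t
  rw [← add_sum_erase _ _ (mem_univ j), update_self]
  congr 1
  exact sum_congr rfl fun i hi => by rw [update_of_ne (ne_of_mem_erase hi)]

lemma bddAbove_signedSum {T : Set (Fin m → ℝ)} {χ : Fin m → ℝ → ℝ} {C : ℝ}
    (hC : ∀ t ∈ T, ∀ i, |χ i (t i)| ≤ C) (σ : Fin m → Bool) :
    BddAbove ((fun t => ∑ i, boolSign (σ i) * χ i (t i)) '' T) := by
  refine ⟨∑ _i : Fin m, C, ?_⟩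
  rintro _ ⟨t, ht, rfl⟩
  exact sum_le_sum fun i _ =>
    (le_abs_self _).trans ((abs_boolSign_mul _ _).trans_le (hC t ht i))

def flipAt (j : Fin m) : Equiv.Perm (Fin m → Bool) :=
  Involutive.toPerm (fun σ : Fin m → Bool => update σ j (!σ j)) fun σ => by simp

lemma flipAt_apply (j : Fin m) (σ : Fin m → Bool) : flipAt j σ = update σ j (!σ j) := rfl

lemma two_mul_sum_supSignedSum (T : Set (Fin m → ℝ)) (χ : Fin m → ℝ → ℝ) (j : Fin m) :
    2 * ∑ σ, supSignedSum T χ σ = ∑ σ, (supSignedSum T χ σ + supSignedSum T χ (flipAt j σ)) := by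
  rw [sum_add_distrib, Equiv.sum_comp (flipAt j) (supSignedSum T χ), two_mul]

theorem sum_supSignedSum_le_of_dominated_at {T : Set (Fin m → ℝ)} {φ ψ : Fin m → ℝ → ℝ}
    {j : Fin m} (hoff : ∀ i ≠ j, φ i = ψ i) (hdom : ∀ s t, |φ j s - φ j t| ≤ |ψ j s - ψ j t|)
    (hψ : ∀ σ : Fin m → Bool, BddAbove ((fun t => ∑ i, boolSign (σ i) * ψ i (t i)) '' T)) :
    ∑ σ, supSignedSum T φ σ ≤ ∑ σ, supSignedSum T ψ σ := by
  refine le_of_mul_le_mul_left ?_ two_pos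
  rw [two_mul_sum_supSignedSum T φ j, two_mul_sum_supSignedSum T ψ j]
  refine sum_le_sum fun σ _ => ?_
  have hrest : ∀ t : Fin m → ℝ, ∑ i ∈ univ.erase j, boolSign (σ i) * ψ i (t i) =
      ∑ i ∈ univ.erase j, boolSign (σ i) * φ i (t i) :=
    fun t => sum_congr rfl fun i hi => by rw [hoff i (ne_of_mem_erase hi)]
  have hbdd : ∀ b, BddAbove ((fun t => boolSign b * ψ j (t j) +
      ∑ i ∈ univ.erase j, boolSign (σ i) * φ i (t i)) '' T) := fun b => by
    simpa only [signedSum_update, hrest] using hψ (update σ j b)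
  -- write `σ` as `update σ j (σ j)` so that `σ` and its flip split alike at `j`
  rw [← update_eq_self j σ, flipAt_apply, update_idem, update_self]
  simp only [supSignedSum, signedSum_update, hrest, boolSign_not, neg_mul]
  refine sSup_add_sSup_neg_le_of_dominated (fun s _ t _ => ?_) (hbdd _)
    (by simpa only [boolSign_not, neg_mul] using hbdd (!σ j))
  calc boolSign (σ j) * φ j (s j) - boolSign (σ j) * φ j (t j)
      = boolSign (σ j) * (φ j (s j) - φ j (t j)) := by ring
    _ ≤ |φ j (s j) - φ j (t j)| := (le_abs_self _).trans_eq (abs_boolSign_mul _ _)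
    _ ≤ |ψ j (s j) - ψ j (t j)| := hdom _ _
    _ = |boolSign (σ j) * ψ j (s j) - boolSign (σ j) * ψ j (t j)| := by
      rw [← mul_sub, abs_boolSign_mul]

theorem sum_supSignedSum_le_of_dominated_of_eq_off {T : Set (Fin m → ℝ)} {φ ψ : Fin m → ℝ → ℝ}
    {C : ℝ} {K : Finset (Fin m)} (hoff : ∀ i ∉ K, φ i = ψ i)
    (hdom : ∀ i s t, |φ i s - φ i t| ≤ |ψ i s - ψ i t|)
    (hφ : ∀ t ∈ T, ∀ i, |φ i (t i)| ≤ C) (hψ : ∀ t ∈ T, ∀ i, |ψ i (t i)| ≤ C) :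
    ∑ σ, supSignedSum T φ σ ≤ ∑ σ, supSignedSum T ψ σ := by
  induction K using Finset.induction_on generalizing φ with
  | empty => rw [funext fun i => hoff i (notMem_empty i)]
  | insert j K hj ih =>
    set φ' := update φ j (ψ j)
    have hφ' : ∀ t ∈ T, ∀ i, |φ' i (t i)| ≤ C := by
      intro t ht i
      by_cases h : i = j
      · subst h; simpa [φ'] using hψ t ht i
      · simpa [φ', update_of_ne h] using hφ t ht i
    have hoff' : ∀ i ∉ K, φ' i = ψ i := by
      intro i hi
      by_cases h : i = j
      · subst h; simp [φ']
      · simp [φ', update_of_ne h, hoff i (by simp [h, hi])]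
    have hdom' : ∀ i s t, |φ' i s - φ' i t| ≤ |ψ i s - ψ i t| := by
      intro i
      by_cases h : i = j
      · subst h; simp [φ']
      · simpa [φ', update_of_ne h] using hdom i
    calc ∑ σ, supSignedSum T φ σ ≤ ∑ σ, supSignedSum T φ' σ :=
          sum_supSignedSum_le_of_dominated_at (fun i hi => (update_of_ne hi _ _).symm)
            (by simpa [φ'] using hdom j) (bddAbove_signedSum hφ')
      _ ≤ ∑ σ, supSignedSum T ψ σ := ih hoff' hdom' hφ'

theorem sum_supSignedSum_le_of_dominated {T : Set (Fin m → ℝ)} {φ ψ : Fin m → ℝ → ℝ} {C : ℝ}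
    (hdom : ∀ i s t, |φ i s - φ i t| ≤ |ψ i s - ψ i t|)
    (hφ : ∀ t ∈ T, ∀ i, |φ i (t i)| ≤ C) (hψ : ∀ t ∈ T, ∀ i, |ψ i (t i)| ≤ C) :
    ∑ σ, supSignedSum T φ σ ≤ ∑ σ, supSignedSum T ψ σ :=
  sum_supSignedSum_le_of_dominated_of_eq_off (K := univ) (fun i hi => absurd (mem_univ i) hi)
    hdom hφ hψ

lemma supSignedSum_const_mul {c : ℝ} (hc : 0 ≤ c) (T : Set (Fin m → ℝ)) (χ : Fin m → ℝ → ℝ)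
    (σ : Fin m → Bool) : supSignedSum T (fun i s => c * χ i s) σ = c * supSignedSum T χ σ := by
  simp_rw [supSignedSum, mul_left_comm _ c, ← mul_sum]
  exact Real.sSup_image_const_mul hc T _

lemma radComp_image_comp {X : Type*} (S : Fin m → X) (F : Set (X → ℝ)) (ψ : ℝ → ℝ) :
    radComp m S ((fun f => ψ ∘ f) '' F) =
      (∑ σ, supSignedSum ((fun f i => f (S i)) '' F) (fun _ => ψ) σ) / m / 2 ^ m := by
  have hm : (0 : ℝ) ≤ 1 / m := by positivity
  simp_rw [radComp, supSignedSum, Set.image_image, Real.sSup_image_const_mul hm, ← mul_sum]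
  simp only [boolSign, comp_apply]
  ring

lemma radComp_eq_sum_supSignedSum {X : Type*} (S : Fin m → X) (F : Set (X → ℝ)) :
    radComp m S F =
      (∑ σ, supSignedSum ((fun f i => f (S i)) '' F) (fun _ => id) σ) / m / 2 ^ m := by
  rw [← radComp_image_comp, Set.image_congr (fun f _ => id_comp f), Set.image_id']

end SignedSums

theorem stmt13 {X : Type*} (F : Set (X → ℝ)) (φ : ℝ → ℝ) (L : ℝ) (hL : 0 ≤ L)
    (hlip : ∀ s t : ℝ, |φ s - φ t| ≤ L * |s - t|)
    (hbd : ∃ C : ℝ, ∀ f ∈ F, ∀ x, |f x| ≤ C)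
    (m : ℕ) (S : Fin m → X) :
    radComp m S ((fun f => φ ∘ f) '' F) ≤ L * radComp m S F := by
  obtain ⟨C, hC⟩ := hbd
  have hT : ∀ t ∈ (fun f i => f (S i)) '' F, ∀ i, |t i| ≤ C := by
    rintro _ ⟨f, hf, rfl⟩ i
    exact hC f hf (S i)
  have hφ : ∀ x, |x| ≤ C → |φ x| ≤ |φ 0| + L * C := fun x hx => by
    have := hlip x 0
    rw [sub_zero] at this
    linarith [abs_sub_abs_le_abs_sub (φ x) (φ 0), mul_le_mul_of_nonneg_left hx hL]
  have hLmul : ∀ x, |x| ≤ C → |L * x| ≤ |φ 0| + L * C := fun x hx => by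
    rw [abs_mul, abs_of_nonneg hL]
    linarith [abs_nonneg (φ 0), mul_le_mul_of_nonneg_left hx hL]
  have hcontract := sum_supSignedSum_le_of_dominated (T := (fun f i => f (S i)) '' F)
    (φ := fun _ => φ) (ψ := fun _ s => L * s)
    (fun _ s t => by rw [← mul_sub, abs_mul, abs_of_nonneg hL]; exact hlip s t)
    (fun t ht i => hφ _ (hT t ht i)) (fun t ht i => hLmul _ (hT t ht i))
  have hscale : ∑ σ, supSignedSum ((fun f i => f (S i)) '' F) (fun _ s => L * s) σ =
      L * ∑ σ, supSignedSum ((fun f i => f (S i)) '' F) (fun _ => id) σ := by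
    rw [mul_sum]
    exact sum_congr rfl fun σ _ => supSignedSum_const_mul hL _ _ σ
  rw [radComp_image_comp, radComp_eq_sum_supSignedSum, mul_div_assoc', mul_div_assoc', ← hscale]
  gcongr
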